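/- Let G be a 3-γc-critical graph with minimum degree δ ≥ 2. Then α(G) ≤ δ + 2. Moreover, if α(G) = δ + 2, then G contains exactly one vertex x of degree δ, and the closed neighborhood N[x] induces a clique in G. -/

import Mathlib

open SimpleGraph Finset

variable {V : Type*}

/-- The graph `G` with the extra edge `uv` added. -/
def SimpleGraph.addEdge (G : SimpleGraph V) (u v : V) : SimpleGraph V :=
  G ⊔ SimpleGraph.fromEdgeSet {s(u, v)}

/-- `D` is a connected dominating set of `G`. -/
def SimpleGraph.IsCDS (G : SimpleGraph V) (D : Set V) : Prop :=
  (∀ v : V, v ∈ D ∨ ∃ u ∈ D, G.Adj u v) ∧ (G.induce D).Connected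

/-- The connected domination number. -/
noncomputable def SimpleGraph.cdn [Fintype V] (G : SimpleGraph V) : ℕ :=
  sInf {n | ∃ D : Finset V, D.card = n ∧ G.IsCDS ↑D}

/-- `G` is a `3`-`γ_c`-critical graph. -/
def SimpleGraph.IsCritical3 [Fintype V] (G : SimpleGraph V) : Prop :=
  G.Connected ∧ G.cdn = 3 ∧
    ∀ u v : V, u ≠ v → ¬G.Adj u v → (G.addEdge u v).cdn < 3

/-- `s` is an independent set of `G`. -/
def SimpleGraph.IsIndepSet' (G : SimpleGraph V) (s : Set V) : Prop :=
  s.Pairwise (fun a b => ¬G.Adj a b)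

/-- The independence number. -/
noncomputable def SimpleGraph.indepNum' [Fintype V] (G : SimpleGraph V) : ℕ :=
  sSup {n | ∃ s : Finset V, G.IsIndepSet' ↑s ∧ s.card = n}

/-- `S` is a vertex cut: removing it leaves a non-connected graph. -/
def SimpleGraph.IsVertexCut [Fintype V] (G : SimpleGraph V) (S : Finset V) : Prop :=
  ¬(G.induce ((↑S : Set V)ᶜ)).Connected

/-- The vertex connectivity: minimum size of a vertex cut. -/
noncomputable def SimpleGraph.conn [Fintype V] (G : SimpleGraph V) : ℕ :=
  sInf {n | ∃ S : Finset V, S.card = n ∧ G.IsVertexCut S}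

/-!
Adding a non-edge `uv` to `G` creates a connected dominating pair while `G` has none, so one
of `u, v`, say `u`, has a neighbour `w ≁ v` such that `{u, w}` dominates every vertex but `v`.
If `S` is independent and `t₁, t₂ ∈ S \ N[x]`, this `w` lies in `N(x) \ S` and is adjacent to
all of `S` except the one vertex it misses. A vertex misses at most one vertex of `S` this way,
so all but one vertex of `S \ N[x]` inject into `N(x) \ S`, whence `|S| ≤ deg x + 2`.

If equality holds, then `x ∈ S`, every neighbour of `x` misses exactly one vertex of `S`, and
distinct neighbours miss distinct vertices. For neighbours `a, b` of `x` missing `t_a, t_b`, the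
first step applied to `t_a, t_b` returns `w = b` (or `w = a`), and `{t_a, b}` dominates `a`, so
`a ∼ b`. Hence a vertex `x` of minimum degree lies in `S` and `N(x)` is a clique. For a second
such vertex `y`, the first step applied to `x, y` gives a `w` adjacent to every vertex except
`y`, and `w` with any neighbour of `y` is a connected dominating pair.
-/

namespace SimpleGraph

variable {G : SimpleGraph V} {S W : Finset V} {a b t t' t₁ t₂ ta tb u v w w' x y z x' y' : V}

def PairDominates (G : SimpleGraph V) (a b z : V) : Prop :=
  z = a ∨ z = b ∨ G.Adj a z ∨ G.Adj b z

lemma pairDominates_comm : G.PairDominates a b z ↔ G.PairDominates b a z := by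
  unfold PairDominates; tauto

lemma PairDominates.adj_right (h : G.PairDominates a b z) (hza : z ≠ a) (hzb : z ≠ b)
    (hz : ¬G.Adj a z) : G.Adj b z := by
  unfold PairDominates at h; tauto

def DominatesExcept (G : SimpleGraph V) (u w v : V) : Prop :=
  G.Adj u w ∧ ¬G.Adj v w ∧ ∀ z, z ≠ v → G.PairDominates u w z

lemma DominatesExcept.adj (h : G.DominatesExcept u w v) (hzu : z ≠ u) (hzv : z ≠ v)
    (hz : ¬G.Adj u z) : G.Adj w z :=
  (h.2.2 z hzv).adj_right hzu (by rintro rfl; exact hz h.1) hz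

lemma addEdge_adj : (G.addEdge u v).Adj a b ↔ G.Adj a b ∨ s(a, b) = s(u, v) ∧ a ≠ b := by
  simp [addEdge]

lemma Adj.of_addEdge (h : (G.addEdge u v).Adj a b) (hab : s(a, b) ≠ s(u, v)) : G.Adj a b := by
  rw [addEdge_adj] at h; tauto

lemma PairDominates.of_addEdge (h : (G.addEdge u v).PairDominates a b z)
    (ha : s(a, z) ≠ s(u, v)) (hb : s(b, z) ≠ s(u, v)) : G.PairDominates a b z := by
  rcases h with h | h | h | h
  exacts [Or.inl h, Or.inr (Or.inl h), Or.inr (Or.inr (Or.inl (h.of_addEdge ha))),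
    Or.inr (Or.inr (Or.inr (h.of_addEdge hb)))]

lemma addEdge_comm : G.addEdge u v = G.addEdge v u := by
  simp [addEdge, Sym2.eq_swap]

lemma induce_pair_connected (hab : a = b ∨ G.Adj a b) : (G.induce {a, b}).Connected := by
  rcases hab with rfl | hab
  · rw [Set.pair_eq_singleton, induce_singleton_eq_top]
    exact connected_top_iff.mpr ⟨⟨a, rfl⟩⟩
  · exact induce_pair_connected_of_adj hab

lemma adj_of_induce_pair_connected (hab : a ≠ b) (h : (G.induce {a, b}).Connected) :
    G.Adj a b := by
  have : Nontrivial ({a, b} : Set V) := (Set.nontrivial_pair hab).coe_sort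
  obtain ⟨⟨c, hc⟩, hac⟩ := h.preconnected.exists_adj_of_nontrivial ⟨a, by simp⟩
  rcases hc with rfl | rfl
  · exact absurd hac (G.induce _).irrefl
  · exact hac

lemma IsIndepSet'.notMem_of_adj (hS : G.IsIndepSet' ↑S) (hu : u ∈ S) (h : G.Adj u w) :
    w ∉ S :=
  fun hw => hS hu hw h.ne h

lemma IsIndepSet'.not_pairDominates (hS : G.IsIndepSet' ↑S) (ha : a ∈ S) (hb : b ∈ S)
    (hz : z ∈ S) (hza : z ≠ a) (hzb : z ≠ b) : ¬G.PairDominates a b z := by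
  rintro (h | h | h | h)
  exacts [hza h, hzb h, hS ha hz (Ne.symm hza) h, hS hb hz (Ne.symm hzb) h]

def MissesOnly (G : SimpleGraph V) (S : Finset V) (w t : V) : Prop :=
  ¬G.Adj w t ∧ ∀ s ∈ S, s ≠ t → G.Adj w s

lemma MissesOnly.eq (h : G.MissesOnly S w t) (h' : G.MissesOnly S w t') (ht : t ∈ S) : t = t' :=
  by_contra fun hne => h.1 (h'.2 t ht hne)

lemma MissesOnly.ne (h : G.MissesOnly S w t) (hw : G.Adj w x) : x ≠ t :=
  fun e => h.1 (e ▸ hw)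

lemma DominatesExcept.missesOnly (h : G.DominatesExcept u w v) (hS : G.IsIndepSet' ↑S)
    (hu : u ∈ S) : G.MissesOnly S w v := by
  refine ⟨fun hwv => h.2.1 hwv.symm, fun s hs hsv => ?_⟩
  by_cases hsu : s = u
  · exact hsu ▸ h.1.symm
  · exact h.adj hsu hsv (hS hu hs (Ne.symm hsu))

section ConnectedDomination

variable [Fintype V]

lemma cdn_le_card {D : Finset V} (hD : G.IsCDS D) : G.cdn ≤ D.card :=
  Nat.sInf_le ⟨D, rfl, hD⟩

lemma exists_isCDS_card_eq_cdn (hconn : G.Connected) :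
    ∃ D : Finset V, D.card = G.cdn ∧ G.IsCDS D :=
  Nat.sInf_mem (s := {n | ∃ D : Finset V, D.card = n ∧ G.IsCDS ↑D}) ⟨_, univ, rfl,
    fun z => Or.inl (mem_univ z), by rw [coe_univ]; exact G.induceUnivIso.connected_iff.mpr hconn⟩

lemma cdn_le_two (hab : a = b ∨ G.Adj a b) (h : ∀ z, G.PairDominates a b z) : G.cdn ≤ 2 := by
  classical
  refine (cdn_le_card (D := {a, b}) ⟨fun z => ?_, ?_⟩).trans card_le_two
  · rcases h z with rfl | rfl | h | h
    exacts [Or.inl (by simp), Or.inl (by simp), Or.inr ⟨a, by simp, h⟩,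
      Or.inr ⟨b, by simp, h⟩]
  · rw [coe_pair]; exact induce_pair_connected hab

lemma exists_pairDominates_of_cdn_le_two (hconn : G.Connected) (h : G.cdn ≤ 2) :
    ∃ a b, (a = b ∨ G.Adj a b) ∧ ∀ z, G.PairDominates a b z := by
  classical
  obtain ⟨D, hDcard, hdom, hDconn⟩ := exists_isCDS_card_eq_cdn hconn
  have hD2 : D.card ≤ 2 := hDcard ▸ h
  interval_cases hD : D.card
  · obtain ⟨z⟩ := hconn.nonempty
    simpa [card_eq_zero.mp hD] using hdom z
  · obtain ⟨a, rfl⟩ := card_eq_one.mp hD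
    refine ⟨a, a, Or.inl rfl, fun z => ?_⟩
    simpa [PairDominates] using hdom z
  · obtain ⟨a, b, hab, rfl⟩ := card_eq_two.mp hD
    rw [coe_pair] at hDconn
    refine ⟨a, b, Or.inr (adj_of_induce_pair_connected hab hDconn), fun z => ?_⟩
    simpa [PairDominates, or_assoc] using hdom z

lemma IsCritical3.not_forall_pairDominates (hG : G.IsCritical3) (hab : a = b ∨ G.Adj a b) :
    ¬∀ z, G.PairDominates a b z := fun h => by
  have := cdn_le_two hab h
  have := hG.2.1
  omega

lemma IsCritical3.exists_pairDominates_addEdge (hG : G.IsCritical3) (huv : u ≠ v)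
    (h : ¬G.Adj u v) :
    ∃ a b, (a = b ∨ (G.addEdge u v).Adj a b) ∧ ∀ z, (G.addEdge u v).PairDominates a b z :=
  exists_pairDominates_of_cdn_le_two (hG.1.mono le_sup_left) (Nat.lt_succ_iff.mp (hG.2.2 u v huv h))

lemma IsCritical3.exists_dominatesExcept_of_addEdge (hG : G.IsCritical3) (huv : u ≠ v)
    (hz : ¬G.PairDominates u v z) (hb : u = b ∨ (G.addEdge u v).Adj u b)
    (hdom : ∀ y, (G.addEdge u v).PairDominates u b y) : ∃ w, G.DominatesExcept u w v := by
  by_cases hbuv : b = u ∨ b = v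
  · refine absurd ?_ hz
    have := hdom z
    simp only [PairDominates, addEdge_adj, Sym2.eq_iff] at this ⊢
    rcases hbuv with rfl | rfl <;> grind
  push Not at hbuv
  have hub : G.Adj u b :=
    (hb.resolve_left (Ne.symm hbuv.1)).of_addEdge (by simp [hbuv.2, huv])
  have hdom' : ∀ y, y ≠ v → G.PairDominates u b y := fun y hy =>
    (hdom y).of_addEdge (by simp [hy, huv]) (by simp [hbuv.1, hbuv.2])
  refine ⟨b, hub, fun hvb => hG.not_forall_pairDominates (Or.inr hub) fun y => ?_, hdom'⟩
  by_cases hy : y = v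
  · exact hy ▸ Or.inr (Or.inr (Or.inr hvb.symm))
  · exact hdom' y hy

theorem IsCritical3.exists_dominatesExcept (hG : G.IsCritical3) (huv : u ≠ v) (h : ¬G.Adj u v)
    (hz : ¬G.PairDominates u v z) :
    ∃ w, G.DominatesExcept u w v ∨ G.DominatesExcept v w u := by
  obtain ⟨a, b, hab, hdom⟩ := hG.exists_pairDominates_addEdge huv h
  have hba : b = a ∨ (G.addEdge u v).Adj b a := hab.imp Eq.symm Adj.symm
  have hdom' : ∀ y, (G.addEdge u v).PairDominates b a y := fun y => pairDominates_comm.mp (hdom y)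
  have hz' : ¬G.PairDominates v u z := pairDominates_comm.not.mp hz
  by_cases hau : a = u
  · subst hau; exact (hG.exists_dominatesExcept_of_addEdge huv hz hab hdom).imp fun _ => Or.inl
  by_cases hbu : b = u
  · subst hbu; exact (hG.exists_dominatesExcept_of_addEdge huv hz hba hdom').imp fun _ => Or.inl
  rw [addEdge_comm] at hab hba hdom hdom'
  by_cases hav : a = v
  · subst hav
    exact (hG.exists_dominatesExcept_of_addEdge huv.symm hz' hab hdom).imp fun _ => Or.inr
  by_cases hbv : b = v
  · subst hbv
    exact (hG.exists_dominatesExcept_of_addEdge huv.symm hz' hba hdom').imp fun _ => Or.inr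
  refine absurd (fun y => (hdom y).of_addEdge ?_ ?_) (hG.not_forall_pairDominates
    (hab.imp_right (Adj.of_addEdge · ?_))) <;> simp [hau, hav, hbu, hbv]

lemma IsCritical3.not_dominatesExcept_of_isClique (hG : G.IsCritical3)
    (hu : G.IsClique (G.neighborSet u)) (h : G.DominatesExcept u w v) (hv : G.Adj v y) : False := by
  have hw : ∀ z, z ≠ w → z ≠ v → G.Adj w z := fun z hzw hzv => by
    rcases h.2.2 z hzv with rfl | rfl | hz | hz
    · exact h.1.symm
    · exact absurd rfl hzw
    · exact hu h.1 hz (Ne.symm hzw)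
    · exact hz
  have hyw : y ≠ w := by rintro rfl; exact h.2.1 hv
  refine hG.not_forall_pairDominates (Or.inr (hw y hyw hv.ne.symm)) fun z => ?_
  by_cases hzw : z = w
  · exact Or.inl hzw
  by_cases hzv : z = v
  · exact hzv ▸ Or.inr (Or.inr (Or.inr hv.symm))
  exact Or.inr (Or.inr (Or.inl (hw z hzw hzv)))

theorem IsCritical3.eq_of_isClique_neighborSet (hG : G.IsCritical3)
    (hx : G.IsClique (G.neighborSet x)) (hy : G.IsClique (G.neighborSet y)) (hxy : ¬G.Adj x y)
    (hz : ¬G.PairDominates x y z) (hx' : G.Adj x x') (hy' : G.Adj y y') : x = y := by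
  by_contra hne
  obtain ⟨w, hw | hw⟩ := hG.exists_dominatesExcept hne hxy hz
  · exact hG.not_dominatesExcept_of_isClique hx hw hy'
  · exact hG.not_dominatesExcept_of_isClique hy hw hx'

end ConnectedDomination

section Missed

open Classical in
noncomputable def missedBy (G : SimpleGraph V) (S W : Finset V) : Finset V :=
  {t ∈ S | ∃ w ∈ W, G.MissesOnly S w t}

lemma mem_missedBy : t ∈ G.missedBy S W ↔ t ∈ S ∧ ∃ w ∈ W, G.MissesOnly S w t := by
  classical
  exact mem_filter

lemma card_missedBy_le : (G.missedBy S W).card ≤ W.card :=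
  card_le_card_of_forall_subsingleton (fun t w => G.MissesOnly S w t)
    (fun _ ht => (mem_missedBy.mp ht).2)
    (fun _ _ _ ht _ ht' => ht.2.eq ht'.2 (mem_missedBy.mp ht.1).1)

variable [DecidableEq V]

lemma card_missedBy_lt (hw : w ∈ W) (h : G.missedBy S W ⊆ G.missedBy S (W.erase w)) :
    (G.missedBy S W).card < W.card :=
  calc (G.missedBy S W).card ≤ (G.missedBy S (W.erase w)).card := card_le_card h
    _ ≤ (W.erase w).card := card_missedBy_le
    _ < W.card := card_erase_lt_of_mem hw

lemma exists_missesOnly_of_card_le_card_missedBy (hM : W.card ≤ (G.missedBy S W).card)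
    (hw : w ∈ W) :
    ∃ t ∈ S, G.MissesOnly S w t := by
  by_contra! h
  refine (card_missedBy_lt hw fun t ht => ?_).not_ge hM
  obtain ⟨htS, w', hw', hm⟩ := mem_missedBy.mp ht
  exact mem_missedBy.mpr ⟨htS, w', mem_erase.mpr ⟨fun e => h t htS (e ▸ hm), hw'⟩, hm⟩

lemma eq_of_missesOnly_of_card_le_card_missedBy (hM : W.card ≤ (G.missedBy S W).card)
    (hw : w ∈ W) (hw' : w' ∈ W) (ht : t ∈ S) (h : G.MissesOnly S w t)
    (h' : G.MissesOnly S w' t) : w = w' := by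
  by_contra hne
  refine (card_missedBy_lt hw' fun t' ht' => ?_).not_ge hM
  obtain ⟨ht'S, w'', hw'', hm⟩ := mem_missedBy.mp ht'
  refine mem_missedBy.mpr ⟨ht'S, ?_⟩
  by_cases h'' : w'' = w'
  · subst h''
    obtain rfl := h'.eq hm ht
    exact ⟨w, mem_erase.mpr ⟨hne, hw⟩, h⟩
  · exact ⟨w'', mem_erase.mpr ⟨h'', hw''⟩, hm⟩

end Missed

section Bound

variable [Fintype V] [DecidableRel G.Adj] [DecidableEq V]

lemma DominatesExcept.mem_neighborFinset_sdiff (h : G.DominatesExcept t₁ w t₂)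
    (hS : G.IsIndepSet' ↑S) (h₁ : t₁ ∈ S) (hx₁ : x ≠ t₁) (hx₂ : x ≠ t₂)
    (hnx : ¬G.Adj t₁ x) :
    w ∈ G.neighborFinset x \ S :=
  mem_sdiff.mpr ⟨(G.mem_neighborFinset x w).mpr (h.adj hx₁ hx₂ hnx).symm,
    hS.notMem_of_adj h₁ h.1⟩

lemma IsCritical3.mem_missedBy_or_mem_missedBy (hG : G.IsCritical3) (hS : G.IsIndepSet' ↑S)
    (h₁ : t₁ ∈ S \ insert x (G.neighborFinset x))
    (h₂ : t₂ ∈ S \ insert x (G.neighborFinset x))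
    (hne : t₁ ≠ t₂) :
    t₁ ∈ G.missedBy S (G.neighborFinset x \ S) ∨
      t₂ ∈ G.missedBy S (G.neighborFinset x \ S) := by
  simp only [mem_sdiff, mem_insert, mem_neighborFinset, not_or] at h₁ h₂
  obtain ⟨h₁S, hx₁, hnx₁⟩ := h₁
  obtain ⟨h₂S, hx₂, hnx₂⟩ := h₂
  have hz : ¬G.PairDominates t₁ t₂ x := by
    rintro (h | h | h | h)
    exacts [hx₁ h.symm, hx₂ h.symm, hnx₁ h.symm, hnx₂ h.symm]
  obtain ⟨w, hw | hw⟩ := hG.exists_dominatesExcept hne (hS h₁S h₂S hne) hz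
  · exact Or.inr (mem_missedBy.mpr ⟨h₂S, w, hw.mem_neighborFinset_sdiff hS h₁S (Ne.symm hx₁)
      (Ne.symm hx₂) (hnx₁ ·.symm), hw.missesOnly hS h₁S⟩)
  · exact Or.inl (mem_missedBy.mpr ⟨h₁S, w, hw.mem_neighborFinset_sdiff hS h₂S (Ne.symm hx₂)
      (Ne.symm hx₁) (hnx₂ ·.symm), hw.missesOnly hS h₂S⟩)

lemma IsCritical3.card_le_card_inter_add_card_missedBy (hG : G.IsCritical3)
    (hS : G.IsIndepSet' ↑S) (x : V) :
    S.card ≤ (S ∩ insert x (G.neighborFinset x)).card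
      + (G.missedBy S (G.neighborFinset x \ S)).card + 1 := by
  have hsplit := card_inter_add_card_sdiff S (insert x (G.neighborFinset x))
  have hmissed := card_le_card_sdiff_add_card (s := S \ insert x (G.neighborFinset x))
    (t := G.missedBy S (G.neighborFinset x \ S))
  have hone :
      ((S \ insert x (G.neighborFinset x)) \ G.missedBy S (G.neighborFinset x \ S)).card ≤ 1 :=
    card_le_one.mpr fun t₁ h₁ t₂ h₂ => by_contra fun hne => by
      rw [mem_sdiff] at h₁ h₂
      exact (hG.mem_missedBy_or_mem_missedBy hS h₁.1 h₂.1 hne).elim h₁.2 h₂.2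
  omega

lemma card_inter_neighborFinset_add_card_sdiff (S : Finset V) (x : V) :
    (S ∩ G.neighborFinset x).card + (G.neighborFinset x \ S).card = G.degree x := by
  rw [inter_comm, card_inter_add_card_sdiff, card_neighborFinset_eq_degree]

theorem IsCritical3.card_le_degree_add_two (hG : G.IsCritical3) (hS : G.IsIndepSet' ↑S) (x : V) :
    S.card ≤ G.degree x + 2 := by
  have hbound := hG.card_le_card_inter_add_card_missedBy hS x
  have hinter :
      (S ∩ insert x (G.neighborFinset x)).card ≤ (S ∩ G.neighborFinset x).card + 1 := by
    by_cases hxS : x ∈ S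
    · rw [inter_insert_of_mem hxS]; exact card_insert_le _ _
    · rw [inter_insert_of_notMem hxS]; omega
  have := card_missedBy_le (G := G) (S := S) (W := G.neighborFinset x \ S)
  have := card_inter_neighborFinset_add_card_sdiff (G := G) S x
  omega

theorem IsCritical3.mem_and_card_le_card_missedBy (hG : G.IsCritical3) (hS : G.IsIndepSet' ↑S)
    (hcard : S.card = G.degree x + 2) :
    x ∈ S ∧ (G.neighborFinset x \ S).card ≤ (G.missedBy S (G.neighborFinset x \ S)).card := by
  have hbound := hG.card_le_card_inter_add_card_missedBy hS x
  have := card_missedBy_le (G := G) (S := S) (W := G.neighborFinset x \ S)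
  have := card_inter_neighborFinset_add_card_sdiff (G := G) S x
  by_cases hxS : x ∈ S
  · rw [inter_insert_of_mem hxS] at hbound
    have := card_insert_le x (S ∩ G.neighborFinset x)
    exact ⟨hxS, by omega⟩
  · rw [inter_insert_of_notMem hxS] at hbound
    omega

lemma adj_of_dominatesExcept (hS : G.IsIndepSet' ↑S) (hxS : x ∈ S)
    (hM : (G.neighborFinset x \ S).card ≤ (G.missedBy S (G.neighborFinset x \ S)).card)
    (ha : G.Adj x a) (hb : b ∈ G.neighborFinset x \ S) (hab : a ≠ b) (hta : ta ∈ S)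
    (htb : tb ∈ S)
    (hma : G.MissesOnly S a ta) (hmb : G.MissesOnly S b tb) (h : G.DominatesExcept ta w tb) :
    G.Adj b a := by
  have hxb : G.Adj b x := ((G.mem_neighborFinset x b).mp (mem_sdiff.mp hb).1).symm
  have hwN := h.mem_neighborFinset_sdiff hS hta (hma.ne ha.symm) (hmb.ne hxb)
    (hS hta hxS (hma.ne ha.symm).symm)
  obtain rfl : w = b :=
    eq_of_missesOnly_of_card_le_card_missedBy hM hwN hb htb (h.missesOnly hS hta) hmb
  have haS : a ∉ S := hS.notMem_of_adj hxS ha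
  exact h.adj (fun e => haS (e ▸ hta)) (fun e => haS (e ▸ htb)) (hma.1 ·.symm)

theorem IsCritical3.isClique_neighborSet_of_card_eq (hG : G.IsCritical3) (hS : G.IsIndepSet' ↑S)
    (hcard : S.card = G.degree x + 2) : G.IsClique (G.neighborSet x) := by
  obtain ⟨hxS, hM⟩ := hG.mem_and_card_le_card_missedBy hS hcard
  have hN : ∀ {a}, G.Adj x a → a ∈ G.neighborFinset x \ S := fun h =>
    mem_sdiff.mpr ⟨(G.mem_neighborFinset x _).mpr h, hS.notMem_of_adj hxS h⟩
  intro a ha b hb hab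
  obtain ⟨ta, hta, hma⟩ := exists_missesOnly_of_card_le_card_missedBy hM (hN ha)
  obtain ⟨tb, htb, hmb⟩ := exists_missesOnly_of_card_le_card_missedBy hM (hN hb)
  have hne : ta ≠ tb := fun e =>
    hab (eq_of_missesOnly_of_card_le_card_missedBy hM (hN ha) (hN hb) hta hma (e ▸ hmb))
  have hz := hS.not_pairDominates hta htb hxS (hma.ne ha.symm) (hmb.ne hb.symm)
  obtain ⟨w, hw | hw⟩ := hG.exists_dominatesExcept hne (hS hta htb hne) hz
  · exact (adj_of_dominatesExcept hS hxS hM ha (hN hb) hab hta htb hma hmb hw).symm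
  · exact adj_of_dominatesExcept hS hxS hM hb (hN ha) (Ne.symm hab) htb hta hmb hma hw

end Bound

lemma indepNum'_le [Fintype V] {n : ℕ}
    (h : ∀ S : Finset V, G.IsIndepSet' ↑S → S.card ≤ n) :
    G.indepNum' ≤ n :=
  csSup_le ⟨0, ∅, by simp [IsIndepSet'], rfl⟩ fun _ ⟨S, hS, hSn⟩ => hSn ▸ h S hS

lemma exists_isIndepSet'_card_eq_indepNum' [Fintype V] :
    ∃ S : Finset V, G.IsIndepSet' ↑S ∧ S.card = G.indepNum' :=
  Nat.sSup_mem (s := {n | ∃ S : Finset V, G.IsIndepSet' ↑S ∧ S.card = n})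
    ⟨0, ∅, by simp [IsIndepSet'], rfl⟩
    ⟨Fintype.card V, fun _ ⟨S, _, hS⟩ => hS ▸ card_le_univ S⟩

end SimpleGraph

theorem stmt_6 {V : Type*} [Fintype V] [Nonempty V] (G : SimpleGraph V)
    [DecidableRel G.Adj] (hG : G.IsCritical3) (hδ : 2 ≤ G.minDegree) :
    G.indepNum' ≤ G.minDegree + 2 ∧
      (G.indepNum' = G.minDegree + 2 →
        ∃ x : V, G.degree x = G.minDegree ∧
          (∀ y : V, G.degree y = G.minDegree → y = x) ∧
          G.IsClique (insert x (G.neighborSet x))) := by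
  classical
  obtain ⟨x, hx⟩ := G.exists_minimal_degree_vertex
  refine ⟨indepNum'_le fun S hS => hx ▸ hG.card_le_degree_add_two hS x, fun hα => ?_⟩
  obtain ⟨S, hS, hcard⟩ := G.exists_isIndepSet'_card_eq_indepNum'
  have htight : ∀ y, G.degree y = G.minDegree → S.card = G.degree y + 2 := by omega
  have hclique y (hy : G.degree y = G.minDegree) :=
    hG.isClique_neighborSet_of_card_eq hS (htight y hy)
  have hmem y (hy : G.degree y = G.minDegree) :=
    (hG.mem_and_card_le_card_missedBy hS (htight y hy)).1
  have hnbr y : ∃ y', G.Adj y y' :=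
    (G.degree_pos_iff_exists_adj y).mp (by have := G.minDegree_le_degree y; omega)
  refine ⟨x, hx.symm, fun y hy => ?_,
    isClique_insert.mpr ⟨hclique x hx.symm, fun _ hb _ => hb⟩⟩
  obtain ⟨z, hz, hzy⟩ := exists_mem_ne (s := S.erase x)
    (by rw [card_erase_of_mem (hmem x hx.symm)]; omega) y
  obtain ⟨hzx, hzS⟩ := mem_erase.mp hz
  by_contra hyx
  obtain ⟨x', hx'⟩ := hnbr x
  obtain ⟨y', hy'⟩ := hnbr y
  exact hyx (hG.eq_of_isClique_neighborSet (hclique y hy) (hclique x hx.symm)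
    (hS (hmem y hy) (hmem x hx.symm) hyx)
    (hS.not_pairDominates (hmem y hy) (hmem x hx.symm) hzS hzy hzx) hy' hx')
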